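/- Let n ≥ 1, let x : Fin n → ℝ satisfy 0 ≤ x i for all i, let i₀ ∈ Fin n be an index at which x attains its minimum, and let c : ℝ. If a vertex j of the threshold graph G_c(x) is non-isolated (i.e., adjacent to at least one vertex), then j is reachable from i₀ in G_c(x). Consequently any two non-isolated vertices of G_c(x) lie in the same connected component. -/

import Mathlib

/-- The threshold graph `G_c(x)`: distinct vertices `i`, `j` are adjacent
iff `x i * x j ≤ c`. -/
def thresholdGraph {n : ℕ} (x : Fin n → ℝ) (c : ℝ) : SimpleGraph (Fin n) where
  Adj i j := i ≠ j ∧ x i * x j ≤ c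
  symm := by
    refine ⟨?_⟩
    intro i j h
    exact ⟨h.1.symm, by rw [mul_comm]; exact h.2⟩
  loopless := by
    refine ⟨?_⟩
    intro i h
    exact h.1 rfl

namespace thresholdGraph

variable {n : ℕ} {x : Fin n → ℝ} {c : ℝ}

theorem adj_of_le_of_adj {i j k : Fin n} (hij : i ≠ j) (hj : 0 ≤ x j) (hik : x i ≤ x k)
    (hjk : (thresholdGraph x c).Adj j k) : (thresholdGraph x c).Adj i j :=
  ⟨hij, calc x i * x j ≤ x k * x j := mul_le_mul_of_nonneg_right hik hj
    _ = x j * x k := mul_comm _ _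
    _ ≤ c := hjk.2⟩

theorem reachable_of_forall_le {i₀ j : Fin n} (hmin : ∀ i, x i₀ ≤ x i) (hj : 0 ≤ x j)
    (hadj : ∃ k, (thresholdGraph x c).Adj j k) : (thresholdGraph x c).Reachable i₀ j := by
  obtain ⟨k, hjk⟩ := hadj
  by_cases hij : i₀ = j
  · exact hij ▸ SimpleGraph.Reachable.refl i₀
  · exact (adj_of_le_of_adj hij hj (hmin k) hjk).reachable

end thresholdGraph

theorem stmt_2_general (n : ℕ) (x : Fin n → ℝ) (hx : ∀ i, 0 ≤ x i)
    (i₀ : Fin n) (hmin : ∀ i, x i₀ ≤ x i) (c : ℝ) :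
    (∀ j : Fin n, (∃ k, (thresholdGraph x c).Adj j k) →
      (thresholdGraph x c).Reachable i₀ j) ∧
    (∀ j j' : Fin n, (∃ k, (thresholdGraph x c).Adj j k) →
      (∃ k, (thresholdGraph x c).Adj j' k) →
      (thresholdGraph x c).Reachable j j') := by
  have reach (j : Fin n) : (∃ k, (thresholdGraph x c).Adj j k) →
      (thresholdGraph x c).Reachable i₀ j :=
    thresholdGraph.reachable_of_forall_le hmin (hx j)
  exact ⟨reach, fun j j' hj hj' => (reach j hj).symm.trans (reach j' hj')⟩

theorem stmt_2 (n : ℕ) (hn : 1 ≤ n) (x : Fin n → ℝ) (hx : ∀ i, 0 ≤ x i)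
    (i₀ : Fin n) (hmin : ∀ i, x i₀ ≤ x i) (c : ℝ) :
    (∀ j : Fin n, (∃ k, (thresholdGraph x c).Adj j k) →
      (thresholdGraph x c).Reachable i₀ j) ∧
    (∀ j j' : Fin n, (∃ k, (thresholdGraph x c).Adj j k) →
      (∃ k, (thresholdGraph x c).Adj j' k) →
      (thresholdGraph x c).Reachable j j') :=
  stmt_2_general n x hx i₀ hmin c
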